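/- Let g be a 4-dimensional nilpotent real Lie algebra endowed with a linear D-complex structure g = g⁺ ⊕ g⁻ with associated endomorphism K. Then every K-invariant 2-form on g is closed: if α ∈ Λ^2 g* satisfies Kα = α, then dα = 0. Consequently, the K-invariant and K-anti-invariant components of any d-closed 2-form are both d-closed. -/

import Mathlib

open scoped BigOperators

noncomputable section ChevalleyEilenberg

variable (g : Type*) [LieRing g] [LieAlgebra ℝ g]

/-- The Chevalley–Eilenberg differential of an alternating `k`-form on a real Lie
algebra, as a function on `(k+1)`-tuples:
`(dα)(x_0,…,x_k) = Σ_{i<j} (−1)^{i+j} α([x_i,x_j], x_0,…,x̂_i,…,x̂_j,…,x_k)`. -/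
def ceD : {k : ℕ} → AlternatingMap ℝ g ℝ (Fin k) → ((Fin (k + 1) → g) → ℝ)
  | 0, _ => 0
  | (k + 1), α => fun x =>
      ∑ i : Fin (k + 2), ∑ j : Fin (k + 2),
        if hij : (i : ℕ) < (j : ℕ) then
          (-1 : ℝ) ^ ((i : ℕ) + (j : ℕ)) *
            α (fun m : Fin (k + 1) =>
                if hm : (m : ℕ) = 0 then ⁅x i, x j⁆
                else
                  x (j.succAbove
                      ((⟨(i : ℕ), by omega⟩ : Fin (k + 1)).succAbove
                        (⟨(m : ℕ) - 1, by omega⟩ : Fin k))))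
        else 0

theorem ceD_zero {k : ℕ} : ceD g (0 : AlternatingMap ℝ g ℝ (Fin k)) = 0 := by
  cases k with
  | zero => rfl
  | succ k => funext x; simp [ceD]

theorem ceD_add {k : ℕ} (α β : AlternatingMap ℝ g ℝ (Fin k)) :
    ceD g (α + β) = ceD g α + ceD g β := by
  cases k with
  | zero => funext x; simp [ceD]
  | succ k =>
    funext x
    simp only [ceD, Pi.add_apply, AlternatingMap.add_apply]
    rw [← Finset.sum_add_distrib]
    refine Finset.sum_congr rfl fun i _ => ?_
    rw [← Finset.sum_add_distrib]
    refine Finset.sum_congr rfl fun j _ => ?_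
    split
    · ring
    · ring

theorem ceD_smul {k : ℕ} (c : ℝ) (α : AlternatingMap ℝ g ℝ (Fin k)) :
    ceD g (c • α) = c • ceD g α := by
  cases k with
  | zero => funext x; simp [ceD]
  | succ k =>
    funext x
    simp only [ceD, Pi.smul_apply, AlternatingMap.smul_apply, smul_eq_mul,
      Finset.mul_sum]
    refine Finset.sum_congr rfl fun i _ => ?_
    refine Finset.sum_congr rfl fun j _ => ?_
    split
    · ring
    · ring

/-- The space of `d`-closed `k`-forms. -/
def Zsub (k : ℕ) : Submodule ℝ (AlternatingMap ℝ g ℝ (Fin k)) where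
  carrier := {α | ceD g α = 0}
  add_mem' := by
    intro a b ha hb
    simp only [Set.mem_setOf_eq] at *
    rw [ceD_add, ha, hb, add_zero]
  zero_mem' := by
    simpa only [Set.mem_setOf_eq] using ceD_zero g
  smul_mem' := by
    intro c a ha
    simp only [Set.mem_setOf_eq] at *
    rw [ceD_smul, ha, smul_zero]

/-- The space of `d`-exact `k`-forms. -/
def Bsub : (k : ℕ) → Submodule ℝ (AlternatingMap ℝ g ℝ (Fin k))
  | 0 => ⊥
  | (k + 1) =>
    { carrier := {α | ∃ β : AlternatingMap ℝ g ℝ (Fin k), ceD g β = ⇑α}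
      add_mem' := by
        rintro a b ⟨βa, hβa⟩ ⟨βb, hβb⟩
        exact ⟨βa + βb, by rw [ceD_add, hβa, hβb]; ext x; simp⟩
      zero_mem' := ⟨0, by rw [ceD_zero]; ext x; simp⟩
      smul_mem' := by
        rintro c a ⟨β, hβ⟩
        exact ⟨c • β, by rw [ceD_smul, hβ]; rfl⟩ }

/-- The `k`-th Lie algebra cohomology `H^k(g;ℝ) = ker d / im d`. -/
abbrev Hcoh (k : ℕ) : Type _ :=
  @HasQuotient.Quotient (↥(Zsub g k)) (Submodule ℝ ↥(Zsub g k)) (@Submodule.hasQuotient ℝ (↥(Zsub g k)) _ _ _)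
    ((Bsub g k).comap (Zsub g k).subtype)

/-- The cohomology class of a `d`-closed `k`-form. -/
def cls {k : ℕ} (α : AlternatingMap ℝ g ℝ (Fin k)) (hα : ceD g α = 0) : Hcoh g k :=
  Submodule.Quotient.mk (⟨α, hα⟩ : Zsub g k)

/-- The subgroup `H^{k+}_K(g;ℝ)` of classes admitting a `d`-closed `K`-invariant
representative.  (The set of such classes is a linear subspace, so taking its span
does not enlarge it.) -/
def Hplus (K : g →ₗ[ℝ] g) (k : ℕ) : Submodule ℝ (Hcoh g k) :=
  Submodule.span ℝ
    {c | ∃ (α : AlternatingMap ℝ g ℝ (Fin k)) (hα : ceD g α = 0),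
        α.compLinearMap K = α ∧ c = cls g α hα}

/-- The subgroup `H^{k−}_K(g;ℝ)` of classes admitting a `d`-closed
`K`-anti-invariant representative. -/
def Hminus (K : g →ₗ[ℝ] g) (k : ℕ) : Submodule ℝ (Hcoh g k) :=
  Submodule.span ℝ
    {c | ∃ (α : AlternatingMap ℝ g ℝ (Fin k)) (hα : ceD g α = 0),
        α.compLinearMap K = -α ∧ c = cls g α hα}

/-- The wedge product of `k` linear functionals, as an alternating `k`-form. -/
def wedge {k : ℕ} (fs : Fin k → (g →ₗ[ℝ] ℝ)) :
    AlternatingMap ℝ g ℝ (Fin k) :=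
  MultilinearMap.alternatization
    ((MultilinearMap.mkPiAlgebra ℝ (Fin k) ℝ).compLinearMap fs)

end ChevalleyEilenberg

/-!
Nilpotency makes every `ad x` nilpotent, hence traceless, and a `2`-dimensional Lie algebra all of
whose `ad x` are traceless is abelian; so `g⁺ = p` and `g⁻ = q` are abelian. A `K`-invariant
`2`-form `α` pairs `p` with `q` trivially, and `dα` is additive and cyclically symmetric, so it
suffices that `dα(x, y, z) = 0` whenever `x, y` lie in the same summand, say `p`. Then `⁅x, y⁆ = 0`
and only the `q`-component of `z` matters; for `z ∈ q` and `S` the `p`-component of `ad z` on `p`,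
`dα(x, y, z) = -(α(Sx, y) + α(x, Sy)) = -tr S · α(x, y)`, and `tr S = tr (ad z) = 0` because
`ad z` kills the abelian `q`.
-/

open LinearMap (trace)

namespace AlternatingMap

theorem fin_two_endo_add_endo_eq_trace_mul {K V : Type*} [Field K] [AddCommGroup V] [Module K V]
    (hV : Module.finrank K V = 2) (ω : V [⋀^Fin 2]→ₗ[K] K) (S : Module.End K V) (x y : V) :
    ω ![S x, y] + ω ![x, S y] = trace K V S * ω ![x, y] := by
  have : Module.Finite K V := Module.finite_of_finrank_eq_succ hV
  let b := Module.finBasisOfFinrankEq K V hV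
  have hS (v : V) (i : Fin 2) :
      b.repr (S v) i = ∑ j, LinearMap.toMatrix b b S i j * b.repr v j := by
    rw [← LinearMap.toMatrix_mulVec_repr b b]; rfl
  rw [ω.eq_smul_basis_det b, LinearMap.trace_eq_matrix_trace K b]
  simp only [smul_apply, Module.Basis.det_apply, Matrix.det_fin_two, Module.Basis.toMatrix_apply,
    Matrix.cons_val_zero, hS, Fin.sum_univ_two, Matrix.cons_val_one, Matrix.cons_val_fin_one,
    smul_eq_mul, Matrix.trace_fin_two]
  ring

variable {R M N : Type*} [CommRing R] [AddCommGroup M] [Module R M] [AddCommGroup N] [Module R N]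

def toBilin (α : M [⋀^Fin 2]→ₗ[R] N) : M →ₗ[R] M →ₗ[R] N :=
  LinearMap.mk₂ R (fun x y => α ![x, y]) (fun _ _ _ => α.map_vecCons_add _ _ _)
    (fun _ _ _ => α.map_vecCons_smul _ _ _) (fun x _ _ => (α.curryLeft x).map_vecCons_add _ _ _)
    (fun _ x _ => (α.curryLeft x).map_vecCons_smul _ _ _)

@[simp]
theorem toBilin_apply (α : M [⋀^Fin 2]→ₗ[R] N) (x y : M) : α.toBilin x y = α ![x, y] := rfl

theorem toBilin_swap (α : M [⋀^Fin 2]→ₗ[R] N) (x y : M) : α.toBilin y x = -α.toBilin x y := by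
  rw [toBilin_apply, toBilin_apply, ← α.map_swap ![x, y] (i := 0) (j := 1) (by decide)]
  congr 1
  ext i; fin_cases i <;> rfl

theorem compLinearMap_apply_fin_two {M' : Type*} [AddCommGroup M'] [Module R M']
    (α : M [⋀^Fin 2]→ₗ[R] N) (f : M' →ₗ[R] M) (x y : M') :
    α.compLinearMap f ![x, y] = α ![f x, f y] :=
  congrArg α (funext fun i => by fin_cases i <;> rfl)

theorem compLinearMap_smul_add_compLinearMap_of_involutive {K : M →ₗ[R] M}
    (hK : K ∘ₗ K = LinearMap.id) (c : R) (α : M [⋀^Fin 2]→ₗ[R] N) :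
    (c • (α + α.compLinearMap K)).compLinearMap K = c • (α + α.compLinearMap K) := by
  ext v
  simp [compLinearMap_apply, ← LinearMap.comp_apply, hK, add_comm]

end AlternatingMap

theorem AlternatingMap.apply_fin_two_eq_zero_of_compLinearMap_eq {M : Type*} [AddCommGroup M]
    [Module ℝ M] {p q : Submodule ℝ M} {K : M →ₗ[ℝ] M} (hKp : ∀ x ∈ p, K x = x)
    (hKq : ∀ x ∈ q, K x = -x) {α : M [⋀^Fin 2]→ₗ[ℝ] ℝ} (hα : α.compLinearMap K = α) {x y : M}
    (hx : x ∈ p) (hy : y ∈ q) : α ![x, y] = 0 := by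
  have h : α.toBilin (K x) (K y) = α.toBilin x y := by
    rw [toBilin_apply, toBilin_apply, ← compLinearMap_apply_fin_two, hα]
  rw [hKp x hx, hKq y hy, map_neg] at h
  simp only [toBilin_apply] at h
  linarith

theorem LinearMap.comp_self_eq_id_of_sup_eq_top {R M : Type*} [Ring R] [AddCommGroup M]
    [Module R M] {p q : Submodule R M} (hpq : p ⊔ q = ⊤) {K : M →ₗ[R] M}
    (hKp : ∀ x ∈ p, K x = x) (hKq : ∀ x ∈ q, K x = -x) : K ∘ₗ K = LinearMap.id := by
  ext v
  obtain ⟨a, ha, b, hb, rfl⟩ := Submodule.mem_sup.1 (hpq ▸ Submodule.mem_top : v ∈ p ⊔ q)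
  simp [hKp a ha, hKq b hb]

theorem LinearMap.trace_projectionOnto_comp_comp_subtype {K M : Type*} [Field K] [AddCommGroup M]
    [Module K M] [FiniteDimensional K M] {p q : Submodule K M} (h : IsCompl p q)
    (f : Module.End K M) (hf : ∀ x ∈ q, f x = 0) :
    trace K p (p.projectionOnto q h ∘ₗ f ∘ₗ p.subtype) = trace K M f := by
  rw [LinearMap.trace_comp_comm', LinearMap.comp_assoc]
  congr 1
  ext x
  conv_rhs => rw [← p.projection_add_projection_eq_self h x]
  rw [map_add, hf _ (q.projection_apply_mem h.symm x), add_zero]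
  rfl

namespace Submodule

variable {R M N : Type*} [Semiring R] [AddCommMonoid M] [Module R M] [AddCommMonoid N]
  {p q : Submodule R M} {D : M → M → M → N}

theorem eq_zero_of_cyclic_of_mem (hpq : p ⊔ q = ⊤)
    (hadd : ∀ x x' y z, D (x + x') y z = D x y z + D x' y z) (hcyc : ∀ x y z, D y z x = D x y z)
    (hp : ∀ x ∈ p, ∀ y ∈ p, ∀ z, D x y z = 0) (hq : ∀ x ∈ q, ∀ y ∈ q, ∀ z, D x y z = 0)
    {x : M} (hx : x ∈ p) (y z : M) : D x y z = 0 := by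
  have hdecomp (w : M) : ∃ a ∈ p, ∃ b ∈ q, a + b = w := Submodule.mem_sup.1 (hpq ▸ mem_top)
  obtain ⟨yp, hyp, yq, hyq, rfl⟩ := hdecomp y
  obtain ⟨zp, hzp, zq, hzq, rfl⟩ := hdecomp z
  have hadd₂ (x y y' z : M) : D x (y + y') z = D x y z + D x y' z := by
    rw [← hcyc x (y + y') z, hadd, hcyc x y z, hcyc x y' z]
  have hadd₃ (x y z z' : M) : D x y (z + z') = D x y z + D x y z' := by
    rw [hcyc (z + z') x y, hadd, ← hcyc z x y, ← hcyc z' x y]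
  rw [hadd₂, hp x hx yp hyp, zero_add, hadd₃, hcyc zp x yq, hp zp hzp x hx, ← hcyc x yq zq,
    hq yq hyq zq hzq, add_zero]

theorem eq_zero_of_cyclic (hpq : p ⊔ q = ⊤)
    (hadd : ∀ x x' y z, D (x + x') y z = D x y z + D x' y z) (hcyc : ∀ x y z, D y z x = D x y z)
    (hp : ∀ x ∈ p, ∀ y ∈ p, ∀ z, D x y z = 0) (hq : ∀ x ∈ q, ∀ y ∈ q, ∀ z, D x y z = 0)
    (x y z : M) : D x y z = 0 := by
  obtain ⟨a, ha, b, hb, rfl⟩ := Submodule.mem_sup.1 (hpq ▸ mem_top : x ∈ p ⊔ q)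
  rw [hadd, eq_zero_of_cyclic_of_mem hpq hadd hcyc hp hq ha,
    eq_zero_of_cyclic_of_mem (sup_comm p q ▸ hpq) hadd hcyc hq hp hb, add_zero]

end Submodule

theorem LieAlgebra.trace_ad_eq_zero {K L : Type*} [Field K] [LieRing L] [LieAlgebra K L]
    [LieRing.IsNilpotent L] (x : L) : trace K L (ad K L x) = 0 :=
  (LinearMap.isNilpotent_trace_of_isNilpotent
    (LieModule.isNilpotent_toEnd_of_isNilpotent K L L x)).eq_zero

theorem LieAlgebra.isLieAbelian_of_finrank_eq_two {K L : Type*} [Field K] [LieRing L]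
    [LieAlgebra K L] [LieRing.IsNilpotent L] (h : Module.finrank K L = 2) : IsLieAbelian L := by
  have key (x u v : L) (ω : L [⋀^Fin 2]→ₗ[K] K) : ω ![⁅x, u⁆, v] + ω ![u, ⁅x, v⁆] = 0 := by
    simpa [trace_ad_eq_zero] using ω.fin_two_endo_add_endo_eq_trace_mul h (ad K L x) u v
  have : Module.Finite K L := Module.finite_of_finrank_eq_succ h
  let b := Module.finBasisOfFinrankEq K L h
  have h01 : ⁅b 0, b 1⁆ = 0 := by
    refine b.ext_elem (Fin.forall_fin_two.2 ⟨?_, ?_⟩)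
    · rw [← lie_skew]
      simpa [-lie_skew, Module.Basis.det_apply, Matrix.det_fin_two, Module.Basis.toMatrix_apply]
        using key (b 1) (b 0) (b 1) b.det
    · simpa [Module.Basis.det_apply, Matrix.det_fin_two, Module.Basis.toMatrix_apply]
        using key (b 0) (b 0) (b 1) b.det
  have h10 : ⁅b 1, b 0⁆ = 0 := by rw [← lie_skew, h01, neg_zero]
  constructor
  intro x y
  rw [← b.sum_repr x, ← b.sum_repr y]
  simp only [Fin.sum_univ_two, lie_add, add_lie, lie_smul, smul_lie, lie_self, h01, h10,
    smul_zero, add_zero]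

theorem LieSubalgebra.lie_eq_zero_of_finrank_eq_two {K L : Type*} [Field K] [LieRing L]
    [LieAlgebra K L] [LieRing.IsNilpotent L] {p : LieSubalgebra K L}
    (hp : Module.finrank K p.toSubmodule = 2) {x y : L} (hx : x ∈ p) (hy : y ∈ p) :
    ⁅x, y⁆ = 0 := by
  have : LieRing.IsNilpotent p :=
    Function.Injective.lieAlgebra_isNilpotent (f := p.incl) Subtype.val_injective
  have := LieAlgebra.isLieAbelian_of_finrank_eq_two (K := K) (L := p) hp
  exact congrArg Subtype.val (trivial_lie_zero p p ⟨x, hx⟩ ⟨y, hy⟩)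

section ChevalleyEilenbergTwoForms

variable {g : Type*} [LieRing g] [LieAlgebra ℝ g]

theorem ceD_sub {k : ℕ} (α β : AlternatingMap ℝ g ℝ (Fin k)) :
    ceD g (α - β) = ceD g α - ceD g β := by
  rw [sub_eq_add_neg, ← neg_one_smul ℝ β, ceD_add, ceD_smul, neg_one_smul, ← sub_eq_add_neg]

theorem ceD_two_cons (α : g [⋀^Fin 2]→ₗ[ℝ] ℝ) (x y z : g) :
    ceD g α ![x, y, z] = -α.toBilin ⁅x, y⁆ z + α.toBilin ⁅x, z⁆ y - α.toBilin ⁅y, z⁆ x := by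
  simp only [ceD, Nat.reduceAdd, Fin.sum_univ_three, Fin.val_fin_lt, Fin.reduceLT,
    lt_self_iff_false, ↓reduceDIte, Fin.isValue]
  norm_num [← sub_eq_add_neg]
  congr <;> funext m <;> fin_cases m <;> rfl

theorem ceD_two_cons_add (α : g [⋀^Fin 2]→ₗ[ℝ] ℝ) (x x' y z : g) :
    ceD g α ![x + x', y, z] = ceD g α ![x, y, z] + ceD g α ![x', y, z] := by
  simp only [ceD_two_cons, add_lie, map_add, LinearMap.add_apply]
  ring

theorem ceD_two_cons_cyclic (α : g [⋀^Fin 2]→ₗ[ℝ] ℝ) (x y z : g) :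
    ceD g α ![y, z, x] = ceD g α ![x, y, z] := by
  rw [ceD_two_cons, ceD_two_cons, ← lie_skew y x, ← lie_skew z x, map_neg, map_neg,
    LinearMap.neg_apply, LinearMap.neg_apply]
  ring

variable [FiniteDimensional ℝ g] [LieRing.IsNilpotent g] {p q : LieSubalgebra ℝ g}
  (hpq : IsCompl p.toSubmodule q.toSubmodule) {α : g [⋀^Fin 2]→ₗ[ℝ] ℝ}
  (hα : ∀ x ∈ p, ∀ y ∈ q, α ![x, y] = 0)
include hpq hα

theorem ceD_two_cons_eq_zero_of_mem_of_mem_of_mem (hp : Module.finrank ℝ p.toSubmodule = 2)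
    (hpab : ∀ x ∈ p, ∀ y ∈ p, ⁅x, y⁆ = 0) (hqab : ∀ z ∈ q, ∀ w ∈ q, ⁅z, w⁆ = 0)
    {x y z : g} (hx : x ∈ p) (hy : y ∈ p) (hz : z ∈ q) : ceD g α ![x, y, z] = 0 := by
  let S : Module.End ℝ p.toSubmodule :=
    p.toSubmodule.projectionOnto q.toSubmodule hpq ∘ₗ LieAlgebra.ad ℝ g z ∘ₗ p.toSubmodule.subtype
  have htr : trace ℝ _ S = 0 := by
    rw [LinearMap.trace_projectionOnto_comp_comp_subtype hpq _ (hqab z hz)]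
    exact LieAlgebra.trace_ad_eq_zero z
  have hqp {w v : g} (hw : w ∈ q) (hv : v ∈ p) : α.toBilin w v = 0 := by
    rw [α.toBilin_swap, α.toBilin_apply, hα v hv w hw, neg_zero]
  have hS (u : p.toSubmodule) {v : g} (hv : v ∈ p) : α.toBilin ⁅z, u⁆ v = α.toBilin (S u) v := by
    conv_lhs => rw [← p.toSubmodule.projection_add_projection_eq_self hpq ⁅z, u⁆]
    rw [map_add, LinearMap.add_apply, hqp (Submodule.projection_apply_mem _ _) hv, add_zero]
    rfl
  have key := (α.compLinearMap p.toSubmodule.subtype).fin_two_endo_add_endo_eq_trace_mul hp S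
    ⟨x, hx⟩ ⟨y, hy⟩
  simp only [htr, zero_mul, AlternatingMap.compLinearMap_apply_fin_two,
    Submodule.subtype_apply] at key
  rw [ceD_two_cons, hpab x hx y hy, map_zero, LinearMap.zero_apply, ← lie_skew x z,
    ← lie_skew y z, map_neg, map_neg, LinearMap.neg_apply, LinearMap.neg_apply, hS ⟨x, hx⟩ hy,
    hS ⟨y, hy⟩ hx, α.toBilin_swap x]
  simp only [AlternatingMap.toBilin_apply]
  linarith

theorem ceD_two_cons_eq_zero_of_mem_of_mem (hp : Module.finrank ℝ p.toSubmodule = 2)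
    (hpab : ∀ x ∈ p, ∀ y ∈ p, ⁅x, y⁆ = 0) (hqab : ∀ z ∈ q, ∀ w ∈ q, ⁅z, w⁆ = 0)
    {x y : g} (hx : x ∈ p) (hy : y ∈ p) (z : g) : ceD g α ![x, y, z] = 0 := by
  obtain ⟨zp, hzp, zq, hzq, rfl⟩ :=
    Submodule.mem_sup.1 (hpq.sup_eq_top ▸ Submodule.mem_top : z ∈ p.toSubmodule ⊔ q.toSubmodule)
  have h := ceD_two_cons_eq_zero_of_mem_of_mem_of_mem hpq hα hp hpab hqab hx hy hzq
  rw [ceD_two_cons, hpab x hx y hy, map_zero, LinearMap.zero_apply] at h ⊢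
  rwa [lie_add, lie_add, hpab x hx zp hzp, hpab y hy zp hzp, zero_add, zero_add]

theorem ceD_eq_zero_of_isCompl (hp : Module.finrank ℝ p.toSubmodule = 2)
    (hq : Module.finrank ℝ q.toSubmodule = 2) : ceD g α = 0 := by
  have hpab (x) (hx : x ∈ p) (y) (hy : y ∈ p) :=
    LieSubalgebra.lie_eq_zero_of_finrank_eq_two hp hx hy
  have hqab (x) (hx : x ∈ q) (y) (hy : y ∈ q) :=
    LieSubalgebra.lie_eq_zero_of_finrank_eq_two hq hx hy
  have hα' (y) (hy : y ∈ q) (x) (hx : x ∈ p) : α ![y, x] = 0 := by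
    rw [← α.toBilin_apply, α.toBilin_swap, α.toBilin_apply, hα x hx y hy, neg_zero]
  funext v
  rw [show v = ![v 0, v 1, v 2] by ext i; fin_cases i <;> rfl]
  exact Submodule.eq_zero_of_cyclic hpq.sup_eq_top (ceD_two_cons_add α) (ceD_two_cons_cyclic α)
    (fun x hx y hy => ceD_two_cons_eq_zero_of_mem_of_mem hpq hα hp hpab hqab hx hy)
    (fun x hx y hy => ceD_two_cons_eq_zero_of_mem_of_mem hpq.symm hα' hq hqab hpab hx hy) _ _ _

end ChevalleyEilenbergTwoForms

theorem four_dim_nilpotent_invariant_two_forms_closed_general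
    (g : Type*) [LieRing g] [LieAlgebra ℝ g] [FiniteDimensional ℝ g]
    [LieRing.IsNilpotent g]
    (p q : LieSubalgebra ℝ g)
    (hcompl : IsCompl p.toSubmodule q.toSubmodule)
    (hp : Module.finrank ℝ p.toSubmodule = 2)
    (hq : Module.finrank ℝ q.toSubmodule = 2)
    (K : g →ₗ[ℝ] g)
    (hKp : ∀ x ∈ p, K x = x) (hKq : ∀ x ∈ q, K x = -x) :
    (∀ α : AlternatingMap ℝ g ℝ (Fin 2),
        α.compLinearMap K = α → ceD g α = 0) ∧
    (∀ α : AlternatingMap ℝ g ℝ (Fin 2), ceD g α = 0 →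
        ceD g ((2⁻¹ : ℝ) • (α + α.compLinearMap K)) = 0 ∧
        ceD g ((2⁻¹ : ℝ) • (α - α.compLinearMap K)) = 0) := by
  have invariant_closed (α : AlternatingMap ℝ g ℝ (Fin 2)) (hα : α.compLinearMap K = α) :
      ceD g α = 0 :=
    ceD_eq_zero_of_isCompl hcompl
      (fun _ hx _ hy => α.apply_fin_two_eq_zero_of_compLinearMap_eq hKp hKq hα hx hy) hp hq
  refine ⟨invariant_closed, fun α hα => ?_⟩
  have hK := LinearMap.comp_self_eq_id_of_sup_eq_top hcompl.sup_eq_top hKp hKq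
  have hplus := invariant_closed _
    (AlternatingMap.compLinearMap_smul_add_compLinearMap_of_involutive hK 2⁻¹ α)
  refine ⟨hplus, ?_⟩
  rw [show (2⁻¹ : ℝ) • (α - α.compLinearMap K) = α - (2⁻¹ : ℝ) • (α + α.compLinearMap K) by
    module, ceD_sub, hα, hplus, sub_zero]

/-- On a `4`-dimensional nilpotent real Lie algebra with a linear
D-complex structure `K`, every `K`-invariant `2`-form is closed; consequently the
`K`-invariant and `K`-anti-invariant components of any closed `2`-form are closed. -/
theorem four_dim_nilpotent_invariant_two_forms_closed
    (g : Type*) [LieRing g] [LieAlgebra ℝ g] [FiniteDimensional ℝ g]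
    [LieRing.IsNilpotent g]
    (hg : Module.finrank ℝ g = 4)
    (p q : LieSubalgebra ℝ g)
    (hcompl : IsCompl p.toSubmodule q.toSubmodule)
    (hp : Module.finrank ℝ p.toSubmodule = 2)
    (hq : Module.finrank ℝ q.toSubmodule = 2)
    (K : g →ₗ[ℝ] g)
    (hKp : ∀ x ∈ p, K x = x) (hKq : ∀ x ∈ q, K x = -x) :
    (∀ α : AlternatingMap ℝ g ℝ (Fin 2),
        α.compLinearMap K = α → ceD g α = 0) ∧
    (∀ α : AlternatingMap ℝ g ℝ (Fin 2), ceD g α = 0 →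
        ceD g ((2⁻¹ : ℝ) • (α + α.compLinearMap K)) = 0 ∧
        ceD g ((2⁻¹ : ℝ) • (α - α.compLinearMap K)) = 0) :=
  four_dim_nilpotent_invariant_two_forms_closed_general g p q hcompl hp hq K hKp hKq
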